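/- arXiv:1901.01534 — 7 statements merged into one kernel-verified Lean document; each statement's English description precedes it below -/
import Mathlib

section
/- Let ℓ, r, m, t ∈ ℕ with n = ℓ + m + r, let f : 𝔽₂^{ℓ+r+1} → 𝔽₂ be a local rule and F : 𝔽₂^n → 𝔽₂^m the cellular automaton it generates with memory ℓ and anticipation r. If F is (t, n)-asynchrony immune, t ≥ ℓ + r, and n ≥ 2ℓ + 2r + 1, then f is center permutive. -/
/-- The cellular automaton of length `ℓ + m + r` with `m` output cells generated by
local rule `f` with memory `ℓ` and anticipation `r`:
`F(x)_i = f(x_i, x_{i+1}, …, x_{i+ℓ+r})`. -/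
def localCA (ℓ m r : ℕ) (f : (Fin (ℓ + r + 1) → ZMod 2) → ZMod 2)
    (x : Fin (ℓ + m + r) → ZMod 2) : Fin m → ZMod 2 :=
  fun i => f (fun j => x ⟨i.val + j.val, by omega⟩)

/-- The asynchronous CA where the cells in `I` are not updated. -/
def asyncCA (ℓ m r : ℕ) (f : (Fin (ℓ + r + 1) → ZMod 2) → ZMod 2)
    (I : Finset (Fin m)) (x : Fin (ℓ + m + r) → ZMod 2) : Fin m → ZMod 2 :=
  fun i =>
    if i ∈ I then x ⟨i.val + ℓ, by omega⟩
    else f (fun j => x ⟨i.val + j.val, by omega⟩)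

/-- A map `G : 𝔽₂ⁿ → 𝔽₂ᵐ` is balanced if every output has exactly `2^(ℓ+r)` preimages. -/
def BalancedCA (ℓ r : ℕ) {n m : ℕ} (G : (Fin n → ZMod 2) → Fin m → ZMod 2) : Prop :=
  ∀ y : Fin m → ZMod 2,
    (Finset.univ.filter (fun x : Fin n → ZMod 2 => G x = y)).card = 2 ^ (ℓ + r)

/-- `f` generates a `(t, n)`-asynchrony immune CA (with `n = ℓ + m + r` cells and `m` output
cells): the synchronous CA is balanced and for every set `I` of at most `t` blocked cells
the asynchronous CA is balanced. -/
def AsynchronyImmune (ℓ m r t : ℕ) (f : (Fin (ℓ + r + 1) → ZMod 2) → ZMod 2) : Prop :=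
  BalancedCA ℓ r (localCA ℓ m r f) ∧
  ∀ I : Finset (Fin m), I.card ≤ t → BalancedCA ℓ r (asyncCA ℓ m r f I)

/-- A local rule is center permutive if for all `u ∈ 𝔽₂^ℓ`, `v ∈ 𝔽₂^r`, `y ∈ 𝔽₂` there is a
unique `b ∈ 𝔽₂` with `f(u, b, v) = y`. -/
def CenterPermutive (ℓ r : ℕ) (f : (Fin (ℓ + r + 1) → ZMod 2) → ZMod 2) : Prop :=
  ∀ (u : Fin ℓ → ZMod 2) (v : Fin r → ZMod 2) (y : ZMod 2),
    ∃! b : ZMod 2,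
      f (fun i =>
        if h : i.val < ℓ then u ⟨i.val, h⟩
        else if h' : i.val = ℓ then b
        else v ⟨i.val - ℓ - 1, by omega⟩) = y

/-!
If `f` ignores the center of some neighbourhood `(u, b, v)`, block the `ℓ + r` cells
`0, …, ℓ + r` other than `ℓ`. The blocked cells copy the configuration cells `ℓ, …, 2ℓ + r`
other than `2ℓ`, and once these read `u` and `v`, cell `ℓ` outputs `f(u, b, v)` whatever the
configuration holds at `2ℓ`. So the `2^m` configurations reading `u` and `v` there are exactly
the preimages of the `2^(m-ℓ-r-1)` outputs beginning with `(u, f(u, b, v), v)`, whereas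
balancedness would give them `2^(m-ℓ-r-1) · 2^(ℓ+r) = 2^(m-1)` preimages.
-/

open Finset Function

theorem ZMod.existsUnique_apply_eq_of_apply_zero_ne_one {g : ZMod 2 → ZMod 2} (h : g 0 ≠ g 1)
    (y : ZMod 2) : ∃! b, g b = y := by
  have hg : Injective g := by
    intro a b hab
    fin_cases a <;> fin_cases b
    exacts [rfl, absurd hab h, absurd hab.symm h, rfl]
  exact (Finite.injective_iff_bijective.mp hg).existsUnique y

theorem card_filter_forall_mem_apply_eq {α β : Type*} [Fintype α] [DecidableEq α] [Fintype β]
    [DecidableEq β] (T : Finset α) (w : α → β) :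
    #{x : α → β | ∀ a ∈ T, x a = w a} = Fintype.card β ^ (Fintype.card α - #T) := by
  have hpi : ({x : α → β | ∀ a ∈ T, x a = w a} : Finset _) =
      Fintype.piFinset fun a => if a ∈ T then {w a} else univ := by
    ext x
    simp only [mem_filter, mem_univ, true_and, Fintype.mem_piFinset]
    refine forall_congr' fun a => ?_
    split_ifs with ha <;> simp [ha]
  simp only [hpi, Fintype.card_piFinset, apply_ite Finset.card, card_singleton, card_univ]
  rw [prod_ite, prod_const_one, one_mul, prod_const, filter_notMem_eq_sdiff,
    card_sdiff_of_subset (subset_univ _), card_univ]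

theorem card_filter_forall_mem_apply_embedding_eq {ι α β : Type*} [Fintype α] [DecidableEq α]
    [Fintype β] [Nonempty β] (e : ι ↪ α) (s : Finset ι)
    (w : ι → β) [DecidablePred fun x : α → β => ∀ i ∈ s, x (e i) = w i] :
    #{x : α → β | ∀ i ∈ s, x (e i) = w i} = Fintype.card β ^ (Fintype.card α - #s) := by
  classical
  rw [← card_map e,
    ← card_filter_forall_mem_apply_eq _ (extend e w fun _ => Classical.arbitrary β)]
  congr 1
  ext x
  simp [e.injective.extend_apply]

theorem BalancedCA.card_filter_mem {ℓ r n m : ℕ} {G : (Fin n → ZMod 2) → Fin m → ZMod 2}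
    (hG : BalancedCA ℓ r G) (Y : Finset (Fin m → ZMod 2)) :
    #{x | G x ∈ Y} = #Y * 2 ^ (ℓ + r) := by
  rw [card_eq_sum_card_fiberwise (f := G) (s := {x | G x ∈ Y}) (t := Y)
    fun x hx => (mem_filter.mp hx).2, ← smul_eq_mul, ← sum_const]
  refine sum_congr rfl fun y hy => ?_
  rw [filter_filter, ← hG y]
  congr 1
  exact filter_congr fun x _ => and_iff_right_of_imp fun h => h ▸ hy

section Asynchronous

variable {ℓ m r : ℕ} {f : (Fin (ℓ + r + 1) → ZMod 2) → ZMod 2} {I : Finset (Fin m)}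

theorem asyncCA_apply_of_mem (x : Fin (ℓ + m + r) → ZMod 2) {i : Fin m} (hi : i ∈ I) :
    asyncCA ℓ m r f I x i = x ⟨i + ℓ, by omega⟩ :=
  if_pos hi

theorem asyncCA_apply_of_notMem (x : Fin (ℓ + m + r) → ZMod 2) {i : Fin m} (hi : i ∉ I) :
    asyncCA ℓ m r f I x i = f fun j => x ⟨i + j, by omega⟩ :=
  if_neg hi

end Asynchronous

section Center

variable {ℓ r : ℕ}

def centerIndex (ℓ r : ℕ) : Fin (ℓ + r + 1) := ⟨ℓ, by omega⟩

def centerWord (u : Fin ℓ → ZMod 2) (b : ZMod 2) (v : Fin r → ZMod 2) :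
    Fin (ℓ + r + 1) → ZMod 2 := fun i =>
  if h : i.val < ℓ then u ⟨i.val, h⟩
  else if h' : i.val = ℓ then b
  else v ⟨i.val - ℓ - 1, by omega⟩

theorem centerWord_centerIndex (u : Fin ℓ → ZMod 2) (b : ZMod 2) (v : Fin r → ZMod 2) :
    centerWord u b v (centerIndex ℓ r) = b := by
  simp [centerWord, centerIndex]

theorem update_centerWord (u : Fin ℓ → ZMod 2) (b b' : ZMod 2) (v : Fin r → ZMod 2) :
    update (centerWord u b v) (centerIndex ℓ r) b' = centerWord u b' v := by
  funext i
  by_cases hi : i = centerIndex ℓ r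
  · rw [hi, update_self, centerWord_centerIndex]
  · have hi' : i.val ≠ ℓ := fun h => hi (Fin.ext h)
    simp [update_of_ne hi, centerWord, hi']

theorem centerPermutive_of_apply_centerWord_ne {f : (Fin (ℓ + r + 1) → ZMod 2) → ZMod 2}
    (hf : ∀ u v, f (centerWord u 0 v) ≠ f (centerWord u 1 v)) : CenterPermutive ℓ r f :=
  fun u v => ZMod.existsUnique_apply_eq_of_apply_zero_ne_one (g := fun b => f (centerWord u b v))
    (hf u v)

end Center

section Counterexample

variable {ℓ m r : ℕ} (hm : ℓ + r + 1 ≤ m)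

def blockedCells : Finset (Fin m) :=
  (univ.erase (centerIndex ℓ r)).map (Fin.castLEEmb hm)

theorem card_blockedCells : #(blockedCells hm) = ℓ + r := by
  simp [blockedCells, card_erase_of_mem]

theorem castLE_mem_blockedCells_iff {j : Fin (ℓ + r + 1)} :
    Fin.castLE hm j ∈ blockedCells hm ↔ j ≠ centerIndex ℓ r := by
  simp [blockedCells, Fin.castLE_inj]

/-- Entry `j` of the window read by output cell `ℓ`; it is also the cell copied by the blocked
output cell `j`. -/
def windowPosition : Fin (ℓ + r + 1) ↪ Fin (ℓ + m + r) :=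
  ⟨fun j => ⟨j + ℓ, by omega⟩, fun j j' h => Fin.ext (by simpa using congrArg Fin.val h)⟩

theorem window_eq_update_of_forall_ne (z : Fin (ℓ + r + 1) → ZMod 2)
    {x : Fin (ℓ + m + r) → ZMod 2}
    (hx : ∀ j, j ≠ centerIndex ℓ r → x (windowPosition hm j) = z j) :
    (fun j : Fin (ℓ + r + 1) => x ⟨ℓ + j, by omega⟩) =
      update z (centerIndex ℓ r) (x (windowPosition hm (centerIndex ℓ r))) := by
  funext j
  by_cases hj : j = centerIndex ℓ r
  · subst hj
    rw [update_self]
    rfl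
  · rw [update_of_ne hj, ← hx j hj]
    exact congrArg x (Fin.ext (Nat.add_comm _ _))

theorem filter_asyncCA_blockedCells_mem_eq {f : (Fin (ℓ + r + 1) → ZMod 2) → ZMod 2}
    (z : Fin (ℓ + r + 1) → ZMod 2)
    (hz : ∀ b, f (update z (centerIndex ℓ r) b) = z (centerIndex ℓ r)) :
    ({x | asyncCA ℓ m r f (blockedCells hm) x ∈
        ({y | ∀ j ∈ univ, y (Fin.castLEEmb hm j) = z j} : Finset (Fin m → ZMod 2))} :
      Finset (Fin (ℓ + m + r) → ZMod 2)) =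
      ({x | ∀ j ∈ univ.erase (centerIndex ℓ r), x (windowPosition hm j) = z j} :
        Finset (Fin (ℓ + m + r) → ZMod 2)) := by
  ext x
  simp only [mem_filter, mem_univ, true_and, and_true, forall_const, mem_erase,
    Fin.castLEEmb_apply]
  constructor
  · intro hx j hj
    rw [← hx j, asyncCA_apply_of_mem _ ((castLE_mem_blockedCells_iff hm).2 hj)]
    rfl
  · intro hx j
    by_cases hj : j = centerIndex ℓ r
    · subst hj
      rw [asyncCA_apply_of_notMem _ fun h => (castLE_mem_blockedCells_iff hm).1 h rfl]
      exact (congrArg f (window_eq_update_of_forall_ne hm z hx)).trans (hz _)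
    · rw [asyncCA_apply_of_mem _ ((castLE_mem_blockedCells_iff hm).2 hj)]
      exact hx j hj

theorem not_balancedCA_asyncCA_blockedCells {f : (Fin (ℓ + r + 1) → ZMod 2) → ZMod 2}
    (z : Fin (ℓ + r + 1) → ZMod 2)
    (hz : ∀ b, f (update z (centerIndex ℓ r) b) = z (centerIndex ℓ r)) :
    ¬ BalancedCA ℓ r (asyncCA ℓ m r f (blockedCells hm)) := by
  intro hbal
  have hcount := hbal.card_filter_mem {y | ∀ j ∈ univ, y (Fin.castLEEmb hm j) = z j}
  rw [filter_asyncCA_blockedCells_mem_eq hm z hz, card_filter_forall_mem_apply_embedding_eq,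
    card_filter_forall_mem_apply_embedding_eq] at hcount
  simp only [ZMod.card, Fintype.card_fin, card_univ, card_erase_of_mem (mem_univ _),
    ← pow_add] at hcount
  have := Nat.pow_right_injective le_rfl hcount
  omega

end Counterexample

/-- Theorem 1: if `F` is `(t,n)`-AI, `t ≥ ℓ + r` and
`n = ℓ + m + r ≥ 2ℓ + 2r + 1`, then the local rule `f` is center permutive. -/
theorem ai_implies_centerPermutive (ℓ r m t : ℕ)
    (f : (Fin (ℓ + r + 1) → ZMod 2) → ZMod 2)
    (hAI : AsynchronyImmune ℓ m r t f)
    (ht : ℓ + r ≤ t) (hn : 2 * ℓ + 2 * r + 1 ≤ ℓ + m + r) :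
    CenterPermutive ℓ r f := by
  have hm : ℓ + r + 1 ≤ m := by omega
  refine centerPermutive_of_apply_centerWord_ne fun u v hconst => ?_
  have hbal := hAI.2 (blockedCells hm) ((card_blockedCells hm).trans_le ht)
  refine not_balancedCA_asyncCA_blockedCells hm (centerWord u (f (centerWord u 0 v)) v)
    (fun b => ?_) hbal
  rw [update_centerWord, centerWord_centerIndex]
  fin_cases b
  exacts [rfl, hconst.symm]
end

section
/- Let ℓ, r, m, t, k ∈ ℕ with n = ℓ + m + r, let f : 𝔽₂^{ℓ+r+1} → 𝔽₂ be a local rule and F : 𝔽₂^n → 𝔽₂^m the CA it generates with memory ℓ and anticipation r. Suppose F is (t, n)-asynchrony immune, t ≥ ℓ + r, and n ≥ 2ℓ + 2r + k. Let F′ : 𝔽₂^{ℓ+k+r} → 𝔽₂^k be the CA with the same local rule f (with m replaced by k). Then for every u ∈ 𝔽₂^ℓ and v ∈ 𝔽₂^r, the map F_{u,v} : 𝔽₂^k → 𝔽₂^k defined by F_{u,v}(x) = F′(u x v) (where u x v denotes the concatenation of u, x, v) is a bijection. -/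
/-- Concatenation `u x v` of vectors `u ∈ 𝔽₂^ℓ`, `x ∈ 𝔽₂^k`, `v ∈ 𝔽₂^r`. -/
def concat3 (ℓ k r : ℕ) (u : Fin ℓ → ZMod 2) (x : Fin k → ZMod 2) (v : Fin r → ZMod 2) :
    Fin (ℓ + k + r) → ZMod 2 :=
  fun i =>
    if h1 : i.val < ℓ then u ⟨i.val, h1⟩
    else if h2 : i.val < ℓ + k then x ⟨i.val - ℓ, by omega⟩
    else v ⟨i.val - ℓ - k, by omega⟩


/-!
To hit `w ∈ 𝔽₂^k` with `x ↦ F'(u x v)`, freeze the `ℓ + r` output cells `0, …, ℓ - 1` and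
`ℓ + k, …, ℓ + k + r - 1` of `F`. A frozen cell `i` copies `x_{i+ℓ}`, so by balancedness of this
asynchronous CA there is an input `x` whose segment `x_ℓ, …, x_{2ℓ+k+r-1}` reads `u x' v` and
whose free cells `ℓ, …, ℓ + k - 1` output `w`. Those cells only see that segment, so
`F'(u x' v) = w`. Surjectivity of a self-map of the finite set `𝔽₂^k` is bijectivity.
-/

open Finset

lemma BalancedCA.surjective {ℓ r n m : ℕ} {G : (Fin n → ZMod 2) → Fin m → ZMod 2}
    (hG : BalancedCA ℓ r G) : Function.Surjective G := by
  intro y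
  have hpos : 0 < (univ.filter fun x => G x = y).card := by
    rw [hG y]
    positivity
  obtain ⟨x, hx⟩ := card_pos.mp hpos
  exact ⟨x, (mem_filter.mp hx).2⟩

lemma asyncCA_of_mem {ℓ m r : ℕ} (f : (Fin (ℓ + r + 1) → ZMod 2) → ZMod 2)
    {I : Finset (Fin m)} (x : Fin (ℓ + m + r) → ZMod 2) {i : Fin m} (hi : i ∈ I) :
    asyncCA ℓ m r f I x i = x ⟨i + ℓ, by omega⟩ :=
  if_pos hi

lemma asyncCA_of_notMem {ℓ m r : ℕ} (f : (Fin (ℓ + r + 1) → ZMod 2) → ZMod 2)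
    {I : Finset (Fin m)} (x : Fin (ℓ + m + r) → ZMod 2) {i : Fin m} (hi : i ∉ I) :
    asyncCA ℓ m r f I x i = localCA ℓ m r f x i :=
  if_neg hi

lemma localCA_shift {ℓ m r k : ℕ} (f : (Fin (ℓ + r + 1) → ZMod 2) → ZMod 2)
    (x : Fin (ℓ + m + r) → ZMod 2) (s : ℕ) (hs : s + k ≤ m) (j : Fin k) :
    localCA ℓ k r f (fun p => x ⟨s + p, by omega⟩) j = localCA ℓ m r f x ⟨s + j, by omega⟩ := by
  simp only [localCA, add_assoc]

section concat3

variable {ℓ k r : ℕ} (u : Fin ℓ → ZMod 2) (v : Fin r → ZMod 2)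

lemma concat3_middle (x : Fin k → ZMod 2) (j : Fin k) :
    concat3 ℓ k r u x v ⟨ℓ + j, by omega⟩ = x j := by
  simp [concat3]

lemma concat3_of_middle (x : Fin k → ZMod 2) {p : Fin (ℓ + k + r)} (hp : ℓ ≤ p.val)
    (hp' : p.val < ℓ + k) : concat3 ℓ k r u x v p = x ⟨p - ℓ, by omega⟩ := by
  simp [concat3, Nat.not_lt.mpr hp, hp']

lemma concat3_congr_middle (x x' : Fin k → ZMod 2) {p : Fin (ℓ + k + r)}
    (hp : p.val < ℓ ∨ ℓ + k ≤ p.val) : concat3 ℓ k r u x v p = concat3 ℓ k r u x' v p := by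
  unfold concat3
  split_ifs <;> first | rfl | omega

end concat3

/-- The output cells of a CA with `m ≥ ℓ + k + r` cells that lie under `u` or `v` when its first
`ℓ + k + r` cells are matched with `u x v`. -/
def frameCells (ℓ k r m : ℕ) : Finset (Fin m) :=
  univ.filter fun i => i.val < ℓ ∨ (ℓ + k ≤ i.val ∧ i.val < ℓ + k + r)

lemma card_frameCells_le (ℓ k r m : ℕ) : (frameCells ℓ k r m).card ≤ ℓ + r := by
  have hsub : (frameCells ℓ k r m).map Fin.valEmbedding ⊆ range ℓ ∪ Ico (ℓ + k) (ℓ + k + r) := by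
    intro i
    simp only [frameCells, mem_map, mem_filter, mem_univ, true_and, Fin.valEmbedding_apply,
      mem_union, mem_range, mem_Ico]
    rintro ⟨i, hi, rfl⟩
    exact hi
  calc (frameCells ℓ k r m).card
      = ((frameCells ℓ k r m).map Fin.valEmbedding).card := (card_map _).symm
    _ ≤ (range ℓ ∪ Ico (ℓ + k) (ℓ + k + r)).card := card_le_card hsub
    _ ≤ (range ℓ).card + (Ico (ℓ + k) (ℓ + k + r)).card := card_union_le _ _
    _ = ℓ + r := by simp

lemma localCA_concat3_eq_of_asyncCA_frameCells {ℓ m r k : ℕ}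
    (f : (Fin (ℓ + r + 1) → ZMod 2) → ZMod 2) (hm : ℓ + k + r ≤ m) (u : Fin ℓ → ZMod 2)
    (w : Fin k → ZMod 2) (v : Fin r → ZMod 2) (x : Fin (ℓ + m + r) → ZMod 2)
    (hx : ∀ p : Fin (ℓ + k + r),
      asyncCA ℓ m r f (frameCells ℓ k r m) x ⟨p, by omega⟩ = concat3 ℓ k r u w v p) :
    localCA ℓ k r f (concat3 ℓ k r u (fun j => x ⟨2 * ℓ + j, by omega⟩) v) = w := by
  have hwindow : concat3 ℓ k r u (fun j => x ⟨2 * ℓ + j, by omega⟩) v =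
      fun p : Fin (ℓ + k + r) => x ⟨ℓ + p, by omega⟩ := by
    funext p
    by_cases hp : p.val < ℓ ∨ ℓ + k ≤ p.val
    · have hpI : (⟨p, by omega⟩ : Fin m) ∈ frameCells ℓ k r m := by
        simp only [frameCells, mem_filter, mem_univ, true_and]
        omega
      have hframe := hx p
      rw [asyncCA_of_mem f x hpI] at hframe
      rw [concat3_congr_middle u v _ w hp, ← hframe]
      exact congrArg x (Fin.ext (add_comm _ _))
    · rw [concat3_of_middle u v _ (by omega) (by omega)]
      exact congrArg x (Fin.ext (by simp only; omega))
  funext j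
  have hjI : (⟨ℓ + j, by omega⟩ : Fin m) ∉ frameCells ℓ k r m := by
    simp [frameCells]
  have hfree := hx ⟨ℓ + j, by omega⟩
  rw [asyncCA_of_notMem f x hjI, concat3_middle] at hfree
  rw [hwindow, localCA_shift f x ℓ (by omega) j, hfree]

/-- Theorem 2: if `F` is `(t,n)`-AI with `t ≥ ℓ + r` and
`n = ℓ + m + r ≥ 2ℓ + 2r + k`, then for each `u ∈ 𝔽₂^ℓ`, `v ∈ 𝔽₂^r` the map
`x ↦ F'(u x v)`, where `F' : 𝔽₂^{ℓ+k+r} → 𝔽₂^k` is the CA with the same local rule,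
is a bijection of `𝔽₂^k`. -/
theorem ai_implies_bijection (ℓ r m t k : ℕ)
    (f : (Fin (ℓ + r + 1) → ZMod 2) → ZMod 2)
    (hAI : AsynchronyImmune ℓ m r t f)
    (ht : ℓ + r ≤ t) (hn : 2 * ℓ + 2 * r + k ≤ ℓ + m + r)
    (u : Fin ℓ → ZMod 2) (v : Fin r → ZMod 2) :
    Function.Bijective
      (fun x : Fin k → ZMod 2 => localCA ℓ k r f (concat3 ℓ k r u x v)) := by
  rw [← Finite.surjective_iff_bijective]
  intro w
  have hm : ℓ + k + r ≤ m := by omega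
  have hbal := hAI.2 (frameCells ℓ k r m) ((card_frameCells_le ℓ k r m).trans ht)
  obtain ⟨x, hx⟩ := hbal.surjective fun i =>
    if h : i.val < ℓ + k + r then concat3 ℓ k r u w v ⟨i, h⟩ else 0
  refine ⟨_, localCA_concat3_eq_of_asyncCA_frameCells f hm u w v x fun p => ?_⟩
  simp only [hx, dif_pos p.isLt]
end

section
/- Let ℓ, m, t ∈ ℕ with r = ℓ and n = 2ℓ + m, let f : 𝔽₂^{2ℓ+1} → 𝔽₂ be a local rule and F : 𝔽₂^n → 𝔽₂^m the CA it generates with memory ℓ and anticipation r = ℓ. If F is (t, n)-asynchrony immune, then the reverse CA F^R : 𝔽₂^n → 𝔽₂^m, i.e. the CA with memory ℓ and anticipation ℓ generated by the reversed local rule f^R(x₀, …, x_{2ℓ}) = f(x_{2ℓ}, …, x₀), is also (t, n)-asynchrony immune. -/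
/-
Reversing the order of the cells is a bijection of `𝔽₂ⁿ` that, when `r = ℓ`, maps the window of
cell `i` onto the window of cell `m - 1 - i` read backwards, and fixes the centre of each window.
So the asynchronous CA of `f^R` blocked on `I` is the asynchronous CA of `f` blocked on the mirror
image of `I`, conjugated by reversal on inputs and outputs; balancedness and `|I|` are invariant.
-/

def reverseWord (n : ℕ) : Equiv.Perm (Fin n → ZMod 2) :=
  Function.Involutive.toPerm (fun x => x ∘ Fin.rev) fun x => by
    funext j
    simp

@[simp]
lemma reverseWord_apply {n : ℕ} (x : Fin n → ZMod 2) (j : Fin n) :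
    reverseWord n x j = x j.rev :=
  rfl

lemma asyncCA_empty (ℓ m r : ℕ) (f : (Fin (ℓ + r + 1) → ZMod 2) → ZMod 2) :
    asyncCA ℓ m r f ∅ = localCA ℓ m r f := by
  funext x i
  simp [asyncCA, localCA]

lemma BalancedCA.comp_perm {ℓ r n m : ℕ} {G : (Fin n → ZMod 2) → Fin m → ZMod 2}
    (hG : BalancedCA ℓ r G) (e : Equiv.Perm (Fin n → ZMod 2))
    (σ : Equiv.Perm (Fin m → ZMod 2)) :
    BalancedCA ℓ r (fun x => σ (G (e x))) := by
  intro y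
  rw [← hG (σ.symm y)]
  refine Finset.card_equiv e fun x => ?_
  simp [Equiv.eq_symm_apply]

lemma asyncCA_reverse (ℓ m : ℕ) (f : (Fin (ℓ + ℓ + 1) → ZMod 2) → ZMod 2)
    (I : Finset (Fin m)) :
    asyncCA ℓ m ℓ (fun x => f (fun j => x j.rev)) I =
      fun x => reverseWord m
        (asyncCA ℓ m ℓ f (I.map Fin.revPerm.toEmbedding) (reverseWord (ℓ + m + ℓ) x)) := by
  funext x i
  have hmem : i.rev ∈ I.map Fin.revPerm.toEmbedding ↔ i ∈ I := by simp
  simp only [asyncCA, reverseWord_apply, hmem]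
  split_ifs
  · congr 1
    ext
    simp only [Fin.val_rev]
    omega
  · congr 1
    funext j
    congr 1
    ext
    simp only [Fin.val_rev]
    omega

/-- Proposition 1: with `r = ℓ`, if the CA generated by `f` is `(t,n)`-AI,
then the CA generated by the reversed rule `f^R(x₀,…,x_{2ℓ}) = f(x_{2ℓ},…,x₀)` is also
`(t,n)`-AI. -/
theorem ai_reverse (ℓ m t : ℕ)
    (f : (Fin (ℓ + ℓ + 1) → ZMod 2) → ZMod 2)
    (hAI : AsynchronyImmune ℓ m ℓ t f) :
    AsynchronyImmune ℓ m ℓ t (fun x => f (fun j => x j.rev)) := by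
  have hasync : ∀ I : Finset (Fin m), I.card ≤ t →
      BalancedCA ℓ ℓ (asyncCA ℓ m ℓ (fun x => f (fun j => x j.rev)) I) := by
    intro I hI
    rw [asyncCA_reverse]
    exact (hAI.2 _ (by simpa using hI)).comp_perm _ _
  refine ⟨?_, hasync⟩
  rw [← asyncCA_empty]
  exact hasync ∅ (by simp)
end

section
/- Let ℓ, r, m, t ∈ ℕ with n = ℓ + m + r, let f : 𝔽₂^{ℓ+r+1} → 𝔽₂ be a local rule and F : 𝔽₂^n → 𝔽₂^m the CA it generates with memory ℓ and anticipation r. If F is (t, n)-asynchrony immune, then the complement CA F^C : 𝔽₂^n → 𝔽₂^m, i.e. the CA with memory ℓ and anticipation r generated by the complemented local rule f^C = 1 ⊕ f, is also (t, n)-asynchrony immune. -/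
theorem BalancedCA.comp_equiv {ℓ r n m : ℕ} {G : (Fin n → ZMod 2) → Fin m → ZMod 2}
    (e : (Fin m → ZMod 2) ≃ (Fin m → ZMod 2)) (hG : BalancedCA ℓ r G) :
    BalancedCA ℓ r (e ∘ G) := by
  intro y
  rw [← hG (e.symm y)]
  congr 1
  exact Finset.filter_congr fun x _ => e.eq_symm_apply.symm

theorem BalancedCA.const_add {ℓ r n m : ℕ} {G : (Fin n → ZMod 2) → Fin m → ZMod 2}
    (c : Fin m → ZMod 2) (hG : BalancedCA ℓ r G) :
    BalancedCA ℓ r (fun x => c + G x) :=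
  hG.comp_equiv (Equiv.addLeft c)

theorem localCA_one_add (ℓ m r : ℕ) (f : (Fin (ℓ + r + 1) → ZMod 2) → ZMod 2) :
    localCA ℓ m r (fun x => 1 + f x) = fun x => 1 + localCA ℓ m r f x :=
  rfl

theorem asyncCA_one_add (ℓ m r : ℕ) (f : (Fin (ℓ + r + 1) → ZMod 2) → ZMod 2)
    (I : Finset (Fin m)) :
    asyncCA ℓ m r (fun x => 1 + f x) I =
      fun x => (fun i => if i ∈ I then 0 else 1) + asyncCA ℓ m r f I x := by
  funext x i
  by_cases hi : i ∈ I <;> simp [asyncCA, hi]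

/-- Proposition 2: if the CA generated by `f` is `(t,n)`-AI, then the CA
generated by the complemented rule `f^C = 1 ⊕ f` is also `(t,n)`-AI. -/
theorem ai_complement (ℓ r m t : ℕ)
    (f : (Fin (ℓ + r + 1) → ZMod 2) → ZMod 2)
    (hAI : AsynchronyImmune ℓ m r t f) :
    AsynchronyImmune ℓ m r t (fun x => 1 + f x) := by
  obtain ⟨hsync, hasync⟩ := hAI
  refine ⟨?_, fun I hI => ?_⟩
  · rw [localCA_one_add]
    exact hsync.const_add 1
  · rw [asyncCA_one_add]
    exact (hasync I hI).const_add _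
end

section
/- Let ℓ, r, m ∈ ℕ with n = ℓ + m + r, let f : 𝔽₂^{ℓ+r+1} → 𝔽₂ be a local rule, F the CA it generates, and F^C the CA generated by the complemented rule f^C = 1 ⊕ f (same memory and anticipation). Then for every I ⊆ {0, …, m−1}, the asynchronous CA F̃_I is balanced if and only if the asynchronous CA (F^C)̃_I is balanced. -/
/-! Adding the constant `1` to the local rule adds `1` to exactly the updated cells, so the
asynchronous CA of `f^C` is the one of `f` followed by a translation of `𝔽₂ᵐ`; a bijection of
the outputs permutes the fibres and so preserves balancedness. -/

theorem balancedCA_equiv_comp_iff (ℓ r : ℕ) {n m : ℕ} (G : (Fin n → ZMod 2) → Fin m → ZMod 2)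
    (e : (Fin m → ZMod 2) ≃ (Fin m → ZMod 2)) :
    BalancedCA ℓ r (e ∘ G) ↔ BalancedCA ℓ r G := by
  simp only [BalancedCA, Function.comp_apply, ← e.eq_symm_apply]
  exact e.symm.forall_congr_right
    (q := fun y => (Finset.univ.filter (G · = y)).card = 2 ^ (ℓ + r))

theorem asyncCA_const_add (ℓ m r : ℕ) (f : (Fin (ℓ + r + 1) → ZMod 2) → ZMod 2)
    (I : Finset (Fin m)) (a : ZMod 2) :
    asyncCA ℓ m r (fun x => a + f x) I =
      fun x => asyncCA ℓ m r f I x + fun i => if i ∈ I then 0 else a := by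
  funext x i
  simp only [asyncCA, Pi.add_apply]
  split_ifs <;> simp [add_comm]

/-- for every set `I` of blocked cells, the asynchronous CA of `f` is
balanced iff the asynchronous CA of the complemented rule `f^C = 1 ⊕ f` is balanced. -/
theorem asyncCA_complement_balanced_iff (ℓ r m : ℕ)
    (f : (Fin (ℓ + r + 1) → ZMod 2) → ZMod 2) (I : Finset (Fin m)) :
    BalancedCA ℓ r (asyncCA ℓ m r f I) ↔
      BalancedCA ℓ r (asyncCA ℓ m r (fun x => 1 + f x) I) := by
  rw [asyncCA_const_add]
  exact (balancedCA_equiv_comp_iff ℓ r _ (Equiv.addRight _)).symm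
end

section
/- Let ℓ = r = 1, m = 8, n = 10, and let f : 𝔽₂³ → 𝔽₂ be the elementary rule given by f(x₀, x₁, x₂) = x₀ ⊕ x₁ (rule 60). Then the CA F : 𝔽₂^{10} → 𝔽₂^8 generated by f with memory 1 and anticipation 1 is (2, 10)-asynchrony immune. -/
/-! For rule 60 the output of cell `i`, blocked or not, determines `x_{i+1}` from `x_i`
(it is `x_{i+1}` or `x_i + x_{i+1}`). So a configuration is determined by its image together
with its two boundary cells `x_0`, `x_{m+1}`; by counting, `x ↦ (F̃_I x, x_0, x_{m+1})` is a
bijection and every fiber of `F̃_I` has exactly `4 = 2^(ℓ+r)` elements, for every `I`.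
The synchronous CA is the case `I = ∅`. -/

open Function Finset

theorem card_fiber_eq_card_of_injective_prodMk {α β γ : Type*} [Fintype α] [Fintype β]
    [Fintype γ] [DecidableEq β] (G : α → β) (e : α → γ)
    (hinj : Injective fun x => (G x, e x))
    (hcard : Fintype.card α = Fintype.card β * Fintype.card γ) (y : β) :
    #{x | G x = y} = Fintype.card γ := by
  have hbij : Bijective fun x => (G x, e x) :=
    (Fintype.bijective_iff_injective_and_card _).2 ⟨hinj, by rw [hcard, Fintype.card_prod]⟩
  refine card_bij (fun x _ => e x) (fun _ _ => mem_univ _) ?_ ?_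
  · intro x hx x' hx' he
    simp only [mem_filter, mem_univ, true_and] at hx hx'
    exact hinj (Prod.ext (hx.trans hx'.symm) he)
  · intro c _
    obtain ⟨x, hx⟩ := hbij.2 (y, c)
    simp only [Prod.mk.injEq] at hx
    exact ⟨x, by simp [hx.1], hx.2⟩

def rule60 : (Fin (1 + 1 + 1) → ZMod 2) → ZMod 2 := fun x => x 0 + x 1

theorem asyncCA_rule60_succ_eq {m : ℕ} {I : Finset (Fin m)} {x x' : Fin (1 + m + 1) → ZMod 2}
    (h : asyncCA 1 m 1 rule60 I x = asyncCA 1 m 1 rule60 I x') (i : Fin m)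
    (hi : x ⟨i, by omega⟩ = x' ⟨i, by omega⟩) :
    x ⟨i + 1, by omega⟩ = x' ⟨i + 1, by omega⟩ := by
  have hcell := congrFun h i
  by_cases hI : i ∈ I
  · simpa [asyncCA, hI] using hcell
  · simp only [asyncCA, hI, if_false, rule60] at hcell
    exact add_left_cancel (hi ▸ hcell)

theorem asyncCA_rule60_injective_with_boundary (m : ℕ) (I : Finset (Fin m)) :
    Injective fun x : Fin (1 + m + 1) → ZMod 2 =>
      (asyncCA 1 m 1 rule60 I x, (x 0, x (Fin.last (1 + m)))) := by
  intro x x' hxx'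
  simp only [Prod.mk.injEq] at hxx'
  obtain ⟨hca, hfirst, hlast⟩ := hxx'
  suffices ∀ k (hk : k < 1 + m + 1), x ⟨k, hk⟩ = x' ⟨k, hk⟩ from funext fun i => this i i.2
  intro k
  induction k with
  | zero => exact fun _ => hfirst
  | succ k ih =>
    intro hk
    by_cases hkm : k < m
    · exact asyncCA_rule60_succ_eq hca ⟨k, hkm⟩ (ih (by omega))
    · obtain rfl : k = m := by omega
      rwa [show (⟨k + 1, hk⟩ : Fin (1 + k + 1)) = Fin.last (1 + k) from Fin.ext (by simp only [Fin.val_last]; omega)]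

theorem asyncCA_rule60_balanced (m : ℕ) (I : Finset (Fin m)) :
    BalancedCA 1 1 (asyncCA 1 m 1 rule60 I) := by
  intro y
  rw [card_fiber_eq_card_of_injective_prodMk _ _ (asyncCA_rule60_injective_with_boundary m I)]
  · simp
  · simp only [Fintype.card_fun, Fintype.card_prod, ZMod.card, Fintype.card_fin]
    ring

/-- elementary rule 60, `f(x₀,x₁,x₂) = x₀ ⊕ x₁`, generates a
`(2,10)`-asynchrony immune CA with `ℓ = r = 1` and `m = 8` output cells. -/
theorem rule60_ai :
    AsynchronyImmune 1 8 1 2 (fun x : Fin (1 + 1 + 1) → ZMod 2 => x 0 + x 1) := by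
  have hsync : localCA 1 8 1 rule60 = asyncCA 1 8 1 rule60 ∅ := by
    funext x i
    simp [localCA, asyncCA]
  exact ⟨hsync ▸ asyncCA_rule60_balanced 8 ∅, fun I _ => asyncCA_rule60_balanced 8 I⟩
end

section
/- Let ℓ = 1, r = 2, m = 8, n = 11. There is no local rule f : 𝔽₂⁴ → 𝔽₂ generating a (3, 11)-asynchrony immune CA F : 𝔽₂^{11} → 𝔽₂^8 (with memory 1 and anticipation 2) whose nonlinearity equals 6; that is, no (3, 11)-asynchrony immune rule of 4 variables is a bent function. -/
/-- The nonlinearity of a Boolean function `f : 𝔽₂^k → 𝔽₂`: the minimum Hamming distance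
of `f` from the affine functions `x ↦ a₀ ⊕ a₁x₁ ⊕ … ⊕ a_k x_k`. -/
noncomputable def nonlinearity {k : ℕ} (f : (Fin k → ZMod 2) → ZMod 2) : ℕ :=
  sInf { d : ℕ | ∃ (a0 : ZMod 2) (a : Fin k → ZMod 2),
    d = (Finset.univ.filter
          (fun x : Fin k → ZMod 2 => f x ≠ a0 + ∑ i, a i * x i)).card }

/-!
Freezing cell `i + 1` while cell `i` is updated makes `F̃_I(x)_{i+1} = x_{i+1+ℓ}` one of the
inputs of `F̃_I(x)_i = f(x_i, …, x_{i+ℓ+r})`. Counting the `x` with `F̃_I(x)_i = F̃_I(x)_{i+1}`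
in two ways, balancedness of `F̃_I` forces `f(v) = v_{ℓ+1}` on exactly half of all `v`, i.e. the Walsh coefficient of `f` at `e_{ℓ+1}`
vanishes. A function on `𝔽₂⁴` of nonlinearity `6` has all Walsh coefficients of absolute value
at most `16 - 2·6 = 4`, and by Parseval their squares sum to `16²`; with one of the sixteen
coefficients zero, the sum is at most `15·4² < 16²`.
-/

open Finset

namespace BooleanFunction

variable {ι : Type*} [Fintype ι] [DecidableEq ι]

def signChar : AddChar (ZMod 2) ℤ := AddChar.zmodChar 2 (neg_one_sq (R := ℤ))

lemma signChar_add (b c : ZMod 2) : signChar (b + c) = if b = c then 1 else -1 := by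
  fin_cases b <;> fin_cases c <;> rfl

lemma signChar_eq_one_iff {b : ZMod 2} : signChar b = 1 ↔ b = 0 := by
  rw [← add_zero b, signChar_add, add_zero]
  split_ifs <;> simp_all

lemma sum_signChar_dotProduct (z : ι → ZMod 2) :
    ∑ a : ι → ZMod 2, signChar (z ⬝ᵥ a) = if z = 0 then 2 ^ Fintype.card ι else 0 := by
  let ψ := signChar.compAddMonoidHom (AddMonoidHom.mk' (z ⬝ᵥ ·) (dotProduct_add z))
  have hψ : ψ = 0 ↔ z = 0 := by
    rw [AddChar.eq_zero_iff, ← dotProduct_eq_zero_iff]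
    exact forall_congr' fun _ => signChar_eq_one_iff
  classical
  change ∑ a, ψ a = _
  simp [AddChar.sum_eq_ite, hψ]

def walsh (f : (ι → ZMod 2) → ZMod 2) (a : ι → ZMod 2) : ℤ :=
  ∑ x, signChar (f x + a ⬝ᵥ x)

variable (f : (ι → ZMod 2) → ZMod 2)

theorem sum_sq_walsh : ∑ a, walsh f a ^ 2 = 2 ^ Fintype.card ι * 2 ^ Fintype.card ι := by
  have hsq (a : ι → ZMod 2) : walsh f a ^ 2 =
      ∑ x, ∑ y, signChar (f x + f y) * signChar ((x + y) ⬝ᵥ a) := by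
    simp_rw [sq, walsh, sum_mul_sum, ← AddChar.map_add_eq_mul, add_dotProduct,
      dotProduct_comm _ a]
    exact sum_congr rfl fun x _ => sum_congr rfl fun y _ => congrArg signChar (by ring)
  calc ∑ a, walsh f a ^ 2
      = ∑ x, ∑ y, signChar (f x + f y) * ∑ a, signChar ((x + y) ⬝ᵥ a) := by
        simp_rw [hsq, mul_sum]
        rw [sum_comm]
        exact sum_congr rfl fun x _ => sum_comm
    _ = 2 ^ Fintype.card ι * 2 ^ Fintype.card ι := by
        have hchar (x y : ι → ZMod 2) : x + y = 0 ↔ x = y := by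
          simp only [funext_iff, Pi.add_apply, Pi.zero_apply, CharTwo.add_eq_zero]
        simp only [sum_signChar_dotProduct, hchar, mul_ite, mul_zero, sum_ite_eq, mem_univ,
          if_true, CharTwo.add_self_eq_zero, AddChar.map_zero_eq_one, one_mul, sum_const,
          card_univ]
        simp

theorem walsh_eq_card_sub_card (a : ι → ZMod 2) :
    walsh f a = #{x | f x = a ⬝ᵥ x} - #{x | f x ≠ a ⬝ᵥ x} := by
  simp only [walsh, signChar_add, sum_ite, sum_const, ne_eq]
  ring

theorem walsh_single_eq_zero (j : ι) (h : 2 * #{x | f x = x j} = 2 ^ Fintype.card ι) :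
    walsh f (Pi.single j 1) = 0 := by
  have hcompl := card_filter_add_card_filter_not (s := univ) (fun x => f x = x j)
  rw [card_univ, Fintype.card_fun, ZMod.card] at hcompl
  simp only [walsh_eq_card_sub_card, single_dotProduct, one_mul, ne_eq]
  omega

theorem walsh_ne_zero_of_sq_walsh_le (hf : ∀ a, walsh f a ^ 2 ≤ 2 ^ Fintype.card ι)
    (a : ι → ZMod 2) : walsh f a ≠ 0 := by
  intro ha
  have hcard : #(univ.erase a) = 2 ^ Fintype.card ι - 1 := by
    rw [card_erase_of_mem (mem_univ a), card_univ, Fintype.card_fun, ZMod.card]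
  have hpos : (0 : ℤ) < 2 ^ Fintype.card ι := by positivity
  have : (2 : ℤ) ^ Fintype.card ι * 2 ^ Fintype.card ι ≤
      (2 ^ Fintype.card ι - 1) * 2 ^ Fintype.card ι :=
    calc (2 : ℤ) ^ Fintype.card ι * 2 ^ Fintype.card ι
        = ∑ b ∈ univ.erase a, walsh f b ^ 2 := by
          rw [sum_erase _ (by simp [ha]), sum_sq_walsh]
      _ ≤ #(univ.erase a) • 2 ^ Fintype.card ι := sum_le_card_nsmul _ _ _ fun b _ => hf b
      _ = (2 ^ Fintype.card ι - 1) * 2 ^ Fintype.card ι := by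
          rw [hcard, nsmul_eq_mul, Nat.cast_sub Nat.one_le_two_pow]
          push_cast; ring
  linarith

theorem abs_walsh_le {k : ℕ} (f : (Fin k → ZMod 2) → ZMod 2) (a : Fin k → ZMod 2) :
    |walsh f a| ≤ 2 ^ k - 2 * nonlinearity f := by
  have hne : nonlinearity f ≤ #{x | f x ≠ a ⬝ᵥ x} :=
    Nat.sInf_le ⟨0, a, by simp only [zero_add]; rfl⟩
  have heq : nonlinearity f ≤ #{x | f x = a ⬝ᵥ x} := by
    have hflip : ∀ b c : ZMod 2, b ≠ 1 + c ↔ b = c := by decide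
    exact Nat.sInf_le ⟨1, a, by simp only [hflip]; rfl⟩
  have hcompl := card_filter_add_card_filter_not (s := univ) (fun x => f x = a ⬝ᵥ x)
  rw [card_univ, Fintype.card_fun, ZMod.card, Fintype.card_fin] at hcompl
  rw [walsh_eq_card_sub_card, abs_sub_le_iff]
  simp only [ne_eq] at hne hcompl ⊢
  zify at hne heq hcompl
  constructor <;> linarith

end BooleanFunction

open BooleanFunction

def windowEmb {k n : ℕ} (i : ℕ) (h : i + k ≤ n) : Fin k ↪ Fin n :=
  (Fin.natAddEmb i).trans (Fin.castLEEmb h)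

theorem card_filter_comp_embedding {κ ι α : Type*} [Fintype κ] [DecidableEq κ] [Fintype ι]
    [DecidableEq ι] [Fintype α] (e : κ ↪ ι) (P : (κ → α) → Prop) [DecidablePred P] :
    #{x : ι → α | P (x ∘ e)} =
      Fintype.card α ^ (Fintype.card ι - Fintype.card κ) * #{u | P u} := by
  classical
  let E : (ι → α) ≃ (κ → α) × ({i // i ∉ Set.range e} → α) :=
    (Equiv.piEquivPiSubtypeProd (· ∈ Set.range e) _).trans <| Equiv.prodCongr
      (Equiv.arrowCongr (Equiv.ofInjective e e.injective).symm (Equiv.refl α)) (Equiv.refl _)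
  have hE (x : ι → α) : (E x).1 = x ∘ e := by
    funext k
    simp [E]
  calc #{x : ι → α | P (x ∘ e)}
        = #(univ.filter P ×ˢ (univ : Finset ({i // i ∉ Set.range e} → α))) :=
        card_equiv E (by simp [hE])
    _ = _ := by
        rw [card_product, card_univ, Fintype.card_fun, Fintype.card_subtype_compl,
          Set.card_range_of_injective e.injective, mul_comm]

theorem BalancedCA.card_filter {ℓ r n m : ℕ} {G : (Fin n → ZMod 2) → Fin m → ZMod 2}
    (hG : BalancedCA ℓ r G) (P : (Fin m → ZMod 2) → Prop) [DecidablePred P] :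
    #{x | P (G x)} = 2 ^ (ℓ + r) * #{y | P y} := by
  rw [card_eq_sum_card_fiberwise (f := G) (t := {y | P y}) fun x hx => by simpa using hx,
    mul_comm, ← smul_eq_mul, ← sum_const]
  refine sum_congr rfl fun y hy => ?_
  rw [filter_filter, ← hG y]
  congr 1
  exact filter_congr fun x _ => ⟨fun h => h.2, fun h => ⟨h ▸ (mem_filter.mp hy).2, h⟩⟩

theorem card_filter_eq_coord_of_balanced_asyncCA {ℓ m r : ℕ}
    {f : (Fin (ℓ + r + 1) → ZMod 2) → ZMod 2} {I : Finset (Fin m)} (i : ℕ) (hi : i + 1 < m)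
    (hr : 0 < r) (hiI : ⟨i, by omega⟩ ∉ I) (hiI' : ⟨i + 1, hi⟩ ∈ I)
    (hbal : BalancedCA ℓ r (asyncCA ℓ m r f I)) :
    #{v | f v = v ⟨ℓ + 1, by omega⟩} = 2 ^ (ℓ + r) := by
  let window : Fin (ℓ + r + 1) ↪ Fin (ℓ + m + r) := windowEmb i (by omega)
  let cells : Fin 2 ↪ Fin m := windowEmb i (by omega)
  have hcells : #{y : Fin m → ZMod 2 | y (cells 0) = y (cells 1)} = 2 ^ (m - 1) := by
    have hpairs : #{u : Fin 2 → ZMod 2 | u 0 = u 1} = 2 := by decide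
    refine (card_filter_comp_embedding cells (fun u => u 0 = u 1)).trans ?_
    rw [hpairs, ZMod.card, Fintype.card_fin, Fintype.card_fin, ← pow_succ]
    congr 1
    omega
  have hwindow := card_filter_comp_embedding window (fun v => f v = v ⟨ℓ + 1, by omega⟩)
  rw [ZMod.card, Fintype.card_fin, Fintype.card_fin,
    show ℓ + m + r - (ℓ + r + 1) = m - 1 by omega] at hwindow
  have hG := hbal.card_filter (fun y => y (cells 0) = y (cells 1))
  have hpair (x : Fin (ℓ + m + r) → ZMod 2) :
      asyncCA ℓ m r f I x (cells 0) = asyncCA ℓ m r f I x (cells 1) ↔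
        f (x ∘ window) = (x ∘ window) ⟨ℓ + 1, by omega⟩ := by
    have h0 : cells 0 = ⟨i, by omega⟩ := rfl
    have h1 : cells 1 = ⟨i + 1, hi⟩ := rfl
    simp only [asyncCA, h0, h1, hiI, hiI', if_true, if_false]
    have hcoord : x ⟨i + 1 + ℓ, by omega⟩ = (x ∘ window) ⟨ℓ + 1, by omega⟩ :=
      congrArg x (Fin.ext (by simp [window, windowEmb]; omega))
    rw [hcoord]
    rfl
  rw [filter_congr fun x _ => hpair x, hcells, hwindow] at hG
  exact Nat.eq_of_mul_eq_mul_left (by positivity) (hG.trans (mul_comm _ _))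

/-- no `(3,11)`-asynchrony immune local rule of 4 variables (memory 1,
anticipation 2, 8 output cells) has nonlinearity `6 = 2³ − 2¹`, i.e. none is bent. -/
theorem no_bent_ai_4var :
    ¬ ∃ f : (Fin (1 + 2 + 1) → ZMod 2) → ZMod 2,
        AsynchronyImmune 1 8 2 3 f ∧ nonlinearity f = 6 := by
  rintro ⟨f, ⟨-, hasync⟩, hnl⟩
  have hcount := card_filter_eq_coord_of_balanced_asyncCA 0 (by norm_num) (by norm_num)
    (by decide) (by decide) (hasync {1} (by simp))
  have hzero : walsh f (Pi.single 2 1) = 0 :=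
    walsh_single_eq_zero f 2 (by simpa using congrArg (2 * ·) hcount)
  have hbent (a) : walsh f a ^ 2 ≤ 2 ^ Fintype.card (Fin (1 + 2 + 1)) := by
    have habs := abs_walsh_le f a
    rw [hnl] at habs
    rw [← sq_abs, Fintype.card_fin]
    exact (pow_le_pow_left₀ (abs_nonneg _) habs 2).trans (by norm_num)
  exact walsh_ne_zero_of_sq_walsh_le f hbent _ hzero
end
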